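/- Let Φ : ℝ^p × ℝ^n → ℝ^n be continuously differentiable, fix θ ∈ ℝ^p and x₀ ∈ ℝ^n, and define the unrolled iterates x_0 = x₀, x_{i} = Φ(θ, x_{i-1}) for i ≥ 1. Suppose x_K → x* as K → ∞, that x* = Φ(θ, x*), and that the state Jacobian J := D₂Φ(θ, x*) has operator norm ‖J‖ < 1. Then I − J is invertible, and the derivative of the K-layer unrolling converges to the implicit-differentiation gradient: D_θ x_K(θ) = Σ_{i=1}^{K} (J_{K-1} ∘ ⋯ ∘ J_i) ∘ D₁Φ(θ, x_{i-1}) (with J_j := D₂Φ(θ, x_j)) converges in operator norm, as K → ∞, to (I − J)⁻¹ ∘ D₁Φ(θ, x*). -/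

import Mathlib

/-!
Differentiating `x_{K+1}(θ) = Φ(θ, x_K(θ))` gives the linear recursion
`D_{K+1} = J_K ∘ D_K + A_K` for `D_K = D_θ x_K(θ)`, with `J_K = D₂Φ(θ, x_K)` and
`A_K = D₁Φ(θ, x_K)`; unrolling it from `D_0 = 0` gives the sum formula. As `Φ` is `C¹` and
`x_K → x*`, we have `J_K → J` and `A_K → A`. The limit `L = (I - J)⁻¹ ∘ A` is the fixed point
of `D ↦ J ∘ D + A`, and the error `e_K = D_K - L` satisfies
`‖e_{K+1}‖ ≤ r ‖e_K‖ + ‖J_K - J‖ ‖L‖ + ‖A_K - A‖` for any `‖J‖ < r < 1` and large `K`,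
which forces `e_K → 0`.
-/

open scoped Topology

/-- `ordComp J i m` is the ordered composition `J (i+m-1) ∘ ⋯ ∘ J (i+1) ∘ J i`
of `m` operators (`J i` applied first); it is the identity when `m = 0`.
In particular `ordComp J i (K - i)` is `J_{K-1} ∘ ⋯ ∘ J_i` for `i ≤ K`. -/
noncomputable def ordComp {𝕜 : Type*} [NontriviallyNormedField 𝕜] {F : Type*}
    [NormedAddCommGroup F] [NormedSpace 𝕜 F]
    (J : ℕ → F →L[𝕜] F) (i : ℕ) : ℕ → (F →L[𝕜] F)
  | 0 => ContinuousLinearMap.id 𝕜 F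
  | m + 1 => (J (i + m)).comp (ordComp J i m)

open Filter

theorem le_pow_mul_add_of_le_mul_add {u : ℕ → ℝ} {r δ : ℝ} {N : ℕ} (hr : 0 ≤ r) (hδ : 0 ≤ δ)
    (h : ∀ k ≥ N, u (k + 1) ≤ r * u k + (1 - r) * δ) (m : ℕ) :
    u (N + m) ≤ r ^ m * u N + δ := by
  induction m with
  | zero => simpa using hδ
  | succ m ih =>
    calc u (N + m + 1) ≤ r * u (N + m) + (1 - r) * δ := h _ (Nat.le_add_right N m)
      _ ≤ r * (r ^ m * u N + δ) + (1 - r) * δ := by gcongr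
      _ = r ^ (m + 1) * u N + δ := by ring

theorem tendsto_zero_of_le_mul_add {u c : ℕ → ℝ} {r : ℝ} (hr0 : 0 ≤ r) (hr1 : r < 1)
    (hu : ∀ k, 0 ≤ u k) (hc : Tendsto c atTop (𝓝 0))
    (h : ∀ᶠ k in atTop, u (k + 1) ≤ r * u k + c k) :
    Tendsto u atTop (𝓝 0) := by
  refine tendsto_order.2 ⟨fun a ha => .of_forall fun k => ha.trans_le (hu k), fun ε hε => ?_⟩
  have hc' : ∀ᶠ k in atTop, c k ≤ (1 - r) * (ε / 2) :=
    hc.eventually_le_const (mul_pos (sub_pos.2 hr1) (half_pos hε))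
  obtain ⟨N, hN⟩ := eventually_atTop.1 (h.and hc')
  have hbound : ∀ m, u (N + m) ≤ r ^ m * u N + ε / 2 :=
    le_pow_mul_add_of_le_mul_add hr0 (by positivity) fun k hk =>
      (hN k hk).1.trans (by linarith [(hN k hk).2])
  have hpow : ∀ᶠ m in atTop, r ^ m * u N < ε / 2 := by
    refine ((tendsto_pow_atTop_nhds_zero_of_lt_one hr0 hr1).mul_const (u N)).eventually_lt_const ?_
    simpa using half_pos hε
  obtain ⟨M, hM⟩ := eventually_atTop.1 hpow
  refine eventually_atTop.2 ⟨N + M, fun k hk => ?_⟩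
  obtain ⟨m, rfl⟩ := Nat.exists_eq_add_of_le (le_of_add_le_left hk)
  linarith [hbound m, hM m (by omega)]

section LinearRecursion

variable {𝕜 E F : Type*} [NontriviallyNormedField 𝕜] [NormedAddCommGroup E] [NormedSpace 𝕜 E]
  [NormedAddCommGroup F] [NormedSpace 𝕜 F]
  {J : ℕ → F →L[𝕜] F} {A D : ℕ → E →L[𝕜] F}

theorem ordComp_sub_succ {i K : ℕ} (hi : i ≤ K) :
    ordComp J i (K + 1 - i) = (J K).comp (ordComp J i (K - i)) := by
  rw [Nat.sub_add_comm hi, ordComp, Nat.add_sub_cancel' hi]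

theorem eq_sum_ordComp_of_linear_rec (hD0 : D 0 = 0) (hD : ∀ k, D (k + 1) = (J k).comp (D k) + A k)
    (K : ℕ) : D K = ∑ i ∈ Finset.Icc 1 K, (ordComp J i (K - i)).comp (A (i - 1)) := by
  induction K with
  | zero => simp [hD0]
  | succ K ih =>
    rw [hD, ih, ContinuousLinearMap.comp_finsetSum, Finset.sum_Icc_succ_top (by omega),
      Nat.sub_self, Nat.add_sub_cancel]
    congr 1
    refine Finset.sum_congr rfl fun i hi => ?_
    rw [ordComp_sub_succ (Finset.mem_Icc.1 hi).2, ContinuousLinearMap.comp_assoc]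

theorem tendsto_of_linear_rec {Jlim : F →L[𝕜] F} {Alim L : E →L[𝕜] F}
    (hJ : Tendsto J atTop (𝓝 Jlim)) (hJ1 : ‖Jlim‖ < 1) (hA : Tendsto A atTop (𝓝 Alim))
    (hL : Jlim.comp L + Alim = L) (hD : ∀ k, D (k + 1) = (J k).comp (D k) + A k) :
    Tendsto D atTop (𝓝 L) := by
  obtain ⟨r, hJr, hr1⟩ := exists_between hJ1
  have hc : Tendsto (fun k => ‖J k - Jlim‖ * ‖L‖ + ‖A k - Alim‖) atTop (𝓝 0) := by
    simpa using ((tendsto_iff_norm_sub_tendsto_zero.1 hJ).mul_const ‖L‖).add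
      (tendsto_iff_norm_sub_tendsto_zero.1 hA)
  refine tendsto_iff_norm_sub_tendsto_zero.2 <|
    tendsto_zero_of_le_mul_add ((norm_nonneg _).trans hJr.le) hr1 (fun _ => norm_nonneg _) hc ?_
  filter_upwards [hJ.norm.eventually_le_const hJr] with k hk
  have herr : D (k + 1) - L = (J k).comp (D k - L) + ((J k - Jlim).comp L + (A k - Alim)) := by
    rw [hD, ContinuousLinearMap.comp_sub, ContinuousLinearMap.sub_comp]
    conv_lhs => rw [← hL]
    abel
  calc ‖D (k + 1) - L‖
      = ‖(J k).comp (D k - L) + ((J k - Jlim).comp L + (A k - Alim))‖ := by rw [herr]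
    _ ≤ ‖(J k).comp (D k - L)‖ + (‖(J k - Jlim).comp L‖ + ‖A k - Alim‖) :=
        (norm_add_le _ _).trans (by gcongr; exact norm_add_le _ _)
    _ ≤ r * ‖D k - L‖ + (‖J k - Jlim‖ * ‖L‖ + ‖A k - Alim‖) := by
        gcongr
        · exact (ContinuousLinearMap.opNorm_comp_le _ _).trans (by gcongr)
        · exact ContinuousLinearMap.opNorm_comp_le _ _

theorem comp_inverse_one_sub_comp_add {Jlim : F →L[𝕜] F} (hJ : IsUnit (1 - Jlim))
    (Alim : E →L[𝕜] F) :
    Jlim.comp ((Ring.inverse (1 - Jlim)).comp Alim) + Alim =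
      (Ring.inverse (1 - Jlim)).comp Alim := by
  have h : ((1 - Jlim) * Ring.inverse (1 - Jlim)).comp Alim = Alim := by
    rw [Ring.mul_inverse_cancel _ hJ]; rfl
  rw [ContinuousLinearMap.mul_def, ContinuousLinearMap.comp_assoc,
    ContinuousLinearMap.sub_comp, ContinuousLinearMap.one_def, ContinuousLinearMap.id_comp] at h
  rw [eq_comm, ← sub_eq_iff_eq_add']
  exact h

end LinearRecursion

section Unrolling

variable {𝕜 E F : Type*} [NontriviallyNormedField 𝕜] [NormedAddCommGroup E] [NormedSpace 𝕜 E]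
  [NormedAddCommGroup F] [NormedSpace 𝕜 F] {Φ : E × F → F}

theorem DifferentiableAt.hasFDerivAt_comp_prodMk {g : E → F} {g' : E →L[𝕜] F} {a : E}
    (hΦ : DifferentiableAt 𝕜 Φ (a, g a)) (hg : HasFDerivAt g g' a) :
    HasFDerivAt (fun t => Φ (t, g t))
      ((fderiv 𝕜 (fun y => Φ (a, y)) (g a)).comp g' + fderiv 𝕜 (fun t => Φ (t, g a)) a) a := by
  have hleft : fderiv 𝕜 (fun t => Φ (t, g a)) a = (fderiv 𝕜 Φ (a, g a)).comp (.inl 𝕜 E F) :=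
    (hΦ.hasFDerivAt.comp a (hasFDerivAt_prodMk_left a (g a))).fderiv
  have hright : fderiv 𝕜 (fun y => Φ (a, y)) (g a) = (fderiv 𝕜 Φ (a, g a)).comp (.inr 𝕜 E F) :=
    (hΦ.hasFDerivAt.comp (g a) (hasFDerivAt_prodMk_right a (g a))).fderiv
  refine (hΦ.hasFDerivAt.comp a ((hasFDerivAt_id a).prodMk hg)).congr_fderiv ?_
  rw [hleft, hright]
  ext v
  simp [← map_add, add_comm]

theorem differentiableAt_unrolled (hΦ : Differentiable 𝕜 Φ) {x : ℕ → E → F} {x₀ : F}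
    (hx0 : ∀ t, x 0 t = x₀) (hxs : ∀ i t, x (i + 1) t = Φ (t, x i t)) (θ : E) (K : ℕ) :
    DifferentiableAt 𝕜 (x K) θ := by
  induction K with
  | zero => rw [funext hx0]; exact differentiableAt_const x₀
  | succ K ih => rw [funext (hxs K)]; exact (hΦ _).comp θ (differentiableAt_id.prodMk ih)

end Unrolling

theorem unrolled_fderiv_tendsto_implicit_general {p n : ℕ}
    (Φ : (EuclideanSpace ℝ (Fin p)) × (EuclideanSpace ℝ (Fin n)) → EuclideanSpace ℝ (Fin n))
    (hΦ : ContDiff ℝ 1 Φ)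
    (θ : EuclideanSpace ℝ (Fin p)) (x₀ : EuclideanSpace ℝ (Fin n))
    (x : ℕ → EuclideanSpace ℝ (Fin p) → EuclideanSpace ℝ (Fin n))
    (hx0 : ∀ t, x 0 t = x₀)
    (hxs : ∀ i t, x (i + 1) t = Φ (t, x i t))
    (xstar : EuclideanSpace ℝ (Fin n))
    (hlim : Filter.Tendsto (fun K => x K θ) Filter.atTop (𝓝 xstar))
    (hJ : ‖fderiv ℝ (fun y => Φ (θ, y)) xstar‖ < 1) :
    IsUnit (ContinuousLinearMap.id ℝ (EuclideanSpace ℝ (Fin n)) -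
      fderiv ℝ (fun y => Φ (θ, y)) xstar) ∧
    (∀ K : ℕ, 1 ≤ K →
      fderiv ℝ (x K) θ =
        ∑ i ∈ Finset.Icc 1 K,
          (ordComp (fun j => fderiv ℝ (fun y => Φ (θ, y)) (x j θ)) i (K - i)).comp
            (fderiv ℝ (fun t => Φ (t, x (i - 1) θ)) θ)) ∧
    Filter.Tendsto (fun K => fderiv ℝ (x K) θ) Filter.atTop
      (𝓝 ((Ring.inverse (ContinuousLinearMap.id ℝ (EuclideanSpace ℝ (Fin n)) -
        fderiv ℝ (fun y => Φ (θ, y)) xstar)).comp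
        (fderiv ℝ (fun t => Φ (t, xstar)) θ))) := by
  have hΦd : Differentiable ℝ Φ := hΦ.differentiable one_ne_zero
  have hdx := differentiableAt_unrolled hΦd hx0 hxs θ
  have hD0 : fderiv ℝ (x 0) θ = 0 := by rw [funext hx0]; exact fderiv_const_apply x₀
  have hrec (K : ℕ) : fderiv ℝ (x (K + 1)) θ = (fderiv ℝ (fun y => Φ (θ, y)) (x K θ)).comp
      (fderiv ℝ (x K) θ) + fderiv ℝ (fun t => Φ (t, x K θ)) θ := by
    rw [funext (hxs K)]
    exact ((hΦd _).hasFDerivAt_comp_prodMk (hdx K).hasFDerivAt).fderiv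
  have hJlim : Tendsto (fun K => fderiv ℝ (fun y => Φ (θ, y)) (x K θ)) atTop
      (𝓝 (fderiv ℝ (fun y => Φ (θ, y)) xstar)) :=
    (((hΦ.comp (contDiff_const.prodMk contDiff_id)).continuous_fderiv one_ne_zero).tendsto
      xstar).comp hlim
  have hAlim : Tendsto (fun K => fderiv ℝ (fun t => Φ (t, x K θ)) θ) atTop
      (𝓝 (fderiv ℝ (fun t => Φ (t, xstar)) θ)) :=
    ((Continuous.fderiv_one (f := fun y t => Φ (t, y))
      (hΦ.comp (contDiff_snd.prodMk contDiff_fst)) continuous_const).tendsto xstar).comp hlim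
  have hunit := (Units.oneSub _ hJ).isUnit
  exact ⟨hunit, fun K _ => eq_sum_ordComp_of_linear_rec (D := fun K => fderiv ℝ (x K) θ) hD0 hrec K,
    tendsto_of_linear_rec hJlim hJ hAlim (comp_inverse_one_sub_comp_add hunit _) hrec⟩

/-- **Gradient equivalence of explicit unrolling and implicit differentiation
(Theorem 3).** Let `Φ : ℝ^p × ℝ^n → ℝ^n` be `C¹`, fix `θ` and `x₀`, and let the
unrolled iterates satisfy `x 0 t = x₀`, `x (i+1) t = Φ (t, x i t)`. Suppose
`x K θ → xstar`, `xstar = Φ (θ, xstar)`, and the state Jacobian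
`J = D₂Φ(θ, xstar)` satisfies `‖J‖ < 1`. Then `I - J` is invertible, the
derivative of the `K`-layer unrolling has the closed form
`D_θ x_K(θ) = Σ_{i=1}^{K} (J_{K-1} ∘ ⋯ ∘ J_i) ∘ D₁Φ(θ, x_{i-1}(θ))` (with
`J_j = D₂Φ(θ, x_j(θ))`), and it converges in operator norm, as `K → ∞`, to the
implicit-differentiation gradient `(I - J)⁻¹ ∘ D₁Φ(θ, xstar)`. -/
theorem unrolled_fderiv_tendsto_implicit {p n : ℕ}
    (Φ : (EuclideanSpace ℝ (Fin p)) × (EuclideanSpace ℝ (Fin n)) → EuclideanSpace ℝ (Fin n))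
    (hΦ : ContDiff ℝ 1 Φ)
    (θ : EuclideanSpace ℝ (Fin p)) (x₀ : EuclideanSpace ℝ (Fin n))
    (x : ℕ → EuclideanSpace ℝ (Fin p) → EuclideanSpace ℝ (Fin n))
    (hx0 : ∀ t, x 0 t = x₀)
    (hxs : ∀ i t, x (i + 1) t = Φ (t, x i t))
    (xstar : EuclideanSpace ℝ (Fin n))
    (hlim : Filter.Tendsto (fun K => x K θ) Filter.atTop (𝓝 xstar))
    (hfix : xstar = Φ (θ, xstar))
    (hJ : ‖fderiv ℝ (fun y => Φ (θ, y)) xstar‖ < 1) :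
    IsUnit (ContinuousLinearMap.id ℝ (EuclideanSpace ℝ (Fin n)) -
      fderiv ℝ (fun y => Φ (θ, y)) xstar) ∧
    (∀ K : ℕ, 1 ≤ K →
      fderiv ℝ (x K) θ =
        ∑ i ∈ Finset.Icc 1 K,
          (ordComp (fun j => fderiv ℝ (fun y => Φ (θ, y)) (x j θ)) i (K - i)).comp
            (fderiv ℝ (fun t => Φ (t, x (i - 1) θ)) θ)) ∧
    Filter.Tendsto (fun K => fderiv ℝ (x K) θ) Filter.atTop
      (𝓝 ((Ring.inverse (ContinuousLinearMap.id ℝ (EuclideanSpace ℝ (Fin n)) -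
        fderiv ℝ (fun y => Φ (θ, y)) xstar)).comp
        (fderiv ℝ (fun t => Φ (t, xstar)) θ))) :=
  unrolled_fderiv_tendsto_implicit_general Φ hΦ θ x₀ x hx0 hxs xstar hlim hJ
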